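/- Rank-one domination criterion: Let Y and Z be finite-dimensional complex vector spaces, let v ∈ Y⊗Z be any vector, and let Z ∈ L(Z) be a positive definite operator. Then 1_Y ⊗ Z ≥ v v* (in the Loewner order) if and only if ⟨Tr_Y(v v*), Z⁻¹⟩ ≤ 1, where ⟨A,B⟩ = Tr(A*B) and Tr_Y denotes the partial trace over Y. -/

import Mathlib

open Matrix
open scoped Kronecker ComplexOrder

noncomputable section

/-- The trace norm `‖A‖₁ = Tr √(A* A)`. -/
def traceNorm {m n : Type*} [Fintype m] [Fintype n] [DecidableEq n]
    (A : Matrix m n ℂ) : ℝ :=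
  ((Matrix.posSemidef_conjTranspose_mul_self A).1.eigenvectorUnitary.1 *
    Matrix.diagonal ((fun x : ℝ => (x : ℂ)) ∘ Real.sqrt ∘ (Matrix.posSemidef_conjTranspose_mul_self A).1.eigenvalues) *
    (star (Matrix.posSemidef_conjTranspose_mul_self A).1.eigenvectorUnitary : Matrix n n ℂ)).trace.re

/-- The spectral norm (operator norm w.r.t. Euclidean norms). -/
def specNorm {m n : Type*} [Fintype m] [Fintype n] [DecidableEq n]
    (A : Matrix m n ℂ) : ℝ :=
  ‖LinearMap.toContinuousLinearMap (Matrix.toEuclideanLin A)‖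

/-- The Frobenius norm `‖A‖₂ = √Tr(A*A)`. -/
def frobeniusNorm {m n : Type*} [Fintype m] [Fintype n] (A : Matrix m n ℂ) : ℝ :=
  Real.sqrt ((Aᴴ * A).trace.re)

/-- Partial trace over the first tensor factor. -/
def ptraceFst {y z : Type*} [Fintype y] (M : Matrix (y × z) (y × z) ℂ) : Matrix z z ℂ :=
  Matrix.of fun a b => ∑ i, M (i, a) (i, b)

/-- Partial trace over the second tensor factor. -/
def ptraceSnd {y z : Type*} [Fintype z] (M : Matrix (y × z) (y × z) ℂ) : Matrix y y ℂ :=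
  Matrix.of fun i j => ∑ a, M (i, a) (j, a)

/-- The super-operator `Φ ⊗ 1_{L(W)}`, for `Φ : L(X) → L(Y)` and `W` indexed by `k`. -/
def tensorId {n m : Type*} [Fintype n] [Fintype m] (k : Type*) [Fintype k]
    (Φ : Matrix n n ℂ →ₗ[ℂ] Matrix m m ℂ) :
    Matrix (n × k) (n × k) ℂ →ₗ[ℂ] Matrix (m × k) (m × k) ℂ where
  toFun M := Matrix.of fun p q => Φ (Matrix.of fun i j => M (i, p.2) (j, q.2)) p.1 q.1
  map_add' M N := by
    ext p q
    show Φ (Matrix.of fun i j => (M + N) (i, p.2) (j, q.2)) p.1 q.1 =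
      Φ (Matrix.of fun i j => M (i, p.2) (j, q.2)) p.1 q.1 +
        Φ (Matrix.of fun i j => N (i, p.2) (j, q.2)) p.1 q.1
    have h : (Matrix.of fun i j => (M + N) (i, p.2) (j, q.2)) =
        (Matrix.of fun i j => M (i, p.2) (j, q.2)) +
          (Matrix.of fun i j => N (i, p.2) (j, q.2)) := rfl
    rw [h, map_add]; rfl
  map_smul' c M := by
    ext p q
    show Φ (Matrix.of fun i j => (c • M) (i, p.2) (j, q.2)) p.1 q.1 =
      (c • Φ (Matrix.of fun i j => M (i, p.2) (j, q.2))) p.1 q.1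
    have h : (Matrix.of fun i j => (c • M) (i, p.2) (j, q.2)) =
        c • (Matrix.of fun i j => M (i, p.2) (j, q.2)) := rfl
    rw [h, _root_.map_smul]

/-- The trace norm induced on super-operators. -/
def inducedTraceNorm {a b : Type*} [Fintype a] [DecidableEq a] [Fintype b] [DecidableEq b]
    (Φ : Matrix a a ℂ →ₗ[ℂ] Matrix b b ℂ) : ℝ :=
  sSup {x : ℝ | ∃ X : Matrix a a ℂ, traceNorm X ≤ 1 ∧ x = traceNorm (Φ X)}

/-- The completely bounded trace norm (diamond norm):
`sup over k ≥ 1 of ‖Φ ⊗ 1_{L(ℂᵏ)}‖₁`. -/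
def diamondNorm {n m : Type*} [Fintype n] [DecidableEq n] [Fintype m] [DecidableEq m]
    (Φ : Matrix n n ℂ →ₗ[ℂ] Matrix m m ℂ) : ℝ :=
  ⨆ k : ℕ, inducedTraceNorm (tensorId (Fin (k + 1)) Φ)


/-- Choi–Jamiołkowski representation `J(Φ) = Σ_{i,j} Φ(E_{i,j}) ⊗ E_{i,j}`. -/
def choi {n m : Type*} [Fintype n] [DecidableEq n] [Fintype m]
    (Φ : Matrix n n ℂ →ₗ[ℂ] Matrix m m ℂ) : Matrix (m × n) (m × n) ℂ :=
  ∑ i : n, ∑ j : n, (Φ (Matrix.single i j 1)) ⊗ₖ (Matrix.single i j 1)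

/-- A quantum channel: a completely positive and trace-preserving super-operator. -/
def IsQuantumChannel {n m : Type*} [Fintype n] [Fintype m]
    (Φ : Matrix n n ℂ →ₗ[ℂ] Matrix m m ℂ) : Prop :=
  (∀ (k : ℕ) (P : Matrix (n × Fin k) (n × Fin k) ℂ), P.PosSemidef →
      (tensorId (Fin k) Φ P).PosSemidef) ∧
    ∀ X : Matrix n n ℂ, (Φ X).trace = X.trace

open Classical in
/-- Square root of a positive semidefinite matrix (junk value `0` otherwise). -/
def matSqrt {r : Type*} [Fintype r] [DecidableEq r] (P : Matrix r r ℂ) : Matrix r r ℂ :=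
  if h : P.PosSemidef then
    h.1.eigenvectorUnitary.1 * Matrix.diagonal ((fun x : ℝ => (x : ℂ)) ∘ Real.sqrt ∘ h.1.eigenvalues) *
      (star h.1.eigenvectorUnitary : Matrix r r ℂ) else 0

/-- The fidelity `F(P,Q) = ‖√P √Q‖₁`. -/
def fidelity {r : Type*} [Fintype r] [DecidableEq r] (P Q : Matrix r r ℂ) : ℝ :=
  traceNorm (matSqrt P * matSqrt Q)


/-!
Both sides are Schur complement conditions for the block matrix `[[A, v], [v*, 1]]` with
`A = 1_Y ⊗ Z`: eliminating the lower-right corner gives `A - v v* ≥ 0`, eliminating the upper-left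
one gives `v* A⁻¹ v ≤ 1`. Since `A⁻¹ = 1_Y ⊗ Z⁻¹`, the quadratic form `v* A⁻¹ v` is the pairing of
`Tr_Y(v v*)` with `Z⁻¹`.
-/

namespace Matrix

theorem trace_vecMulVec_mul {n R : Type*} [Fintype n] [CommSemiring R] (a b : n → R)
    (C : Matrix n n R) : (vecMulVec a b * C).trace = b ⬝ᵥ C *ᵥ a := by
  rw [trace_mul_comm, mul_vecMulVec, trace_vecMulVec, dotProduct_comm]

variable {n K : Type*} [Fintype n] [DecidableEq n]
  [Field K] [PartialOrder K] [StarRing K] [StarOrderedRing K]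

theorem posSemidef_unit_iff {M : Matrix Unit Unit K} : M.PosSemidef ↔ 0 ≤ M () () := by
  have hM : M = diagonal fun _ => M () () := by ext ⟨⟩ ⟨⟩; rfl
  rw [hM, posSemidef_diagonal_iff, Unique.forall_iff, diagonal_apply_eq]

theorem posSemidef_sub_vecMulVec_star_iff {A : Matrix n n K} (hA : A.PosDef) (v : n → K) :
    (A - vecMulVec v (star v)).PosSemidef ↔ star v ⬝ᵥ A⁻¹ *ᵥ v ≤ 1 := by
  let := hA.isUnit.invertible
  let : Invertible (1 : Matrix Unit Unit K) := invertibleOne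
  have schur₂₂ := PosDef.fromBlocks₂₂ A (replicateCol Unit v) (D := 1) PosDef.one
  have schur₁₁ := PosDef.fromBlocks₁₁ (replicateCol Unit v) 1 hA
  rw [inv_one, Matrix.mul_one, conjTranspose_replicateCol, ← vecMulVec_eq] at schur₂₂
  rw [conjTranspose_replicateCol, ← replicateRow_vecMul, replicateRow_mul_replicateCol,
    posSemidef_unit_iff, sub_apply, one_apply_eq, of_apply, ← dotProduct_mulVec,
    sub_nonneg] at schur₁₁
  rw [← schur₂₂, schur₁₁]

end Matrix

theorem Complex.le_one_iff_re_le_one {z : ℂ} (hz : 0 ≤ z) : z ≤ 1 ↔ z.re ≤ 1 := by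
  rw [eq_re_of_ofReal_le (z := z) (r := 0) (by simpa using hz), ← ofReal_one, real_le_real,
    ofReal_re]

section PartialTrace

variable {y z : Type*} [Fintype y]

theorem conjTranspose_ptraceFst (M : Matrix (y × z) (y × z) ℂ) :
    (ptraceFst M)ᴴ = ptraceFst Mᴴ := by
  ext a b
  simp [ptraceFst, conjTranspose_apply]

theorem trace_ptraceFst_mul [Fintype z] [DecidableEq y] (M : Matrix (y × z) (y × z) ℂ)
    (B : Matrix z z ℂ) : (ptraceFst M * B).trace = (M * ((1 : Matrix y y ℂ) ⊗ₖ B)).trace := by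
  simp only [trace, ptraceFst, diag_apply, mul_apply, of_apply, Finset.sum_mul,
    kroneckerMap_apply, one_apply, ite_mul, one_mul, zero_mul, mul_ite, mul_zero,
    Fintype.sum_prod_type, Finset.sum_ite_irrel, Finset.sum_const_zero, Finset.sum_ite_eq',
    Finset.mem_univ, ↓reduceIte]
  exact (Finset.sum_congr rfl fun _ _ => Finset.sum_comm).trans Finset.sum_comm

end PartialTrace

/-- Rank-one domination criterion:
`1_Y ⊗ Z ≥ v v*` iff `⟨Tr_Y(v v*), Z⁻¹⟩ ≤ 1`. -/
theorem rank_one_domination {m r : ℕ} (v : Fin m × Fin r → ℂ)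
    (Z : Matrix (Fin r) (Fin r) ℂ) (hZ : Z.PosDef) :
    (((1 : Matrix (Fin m) (Fin m) ℂ) ⊗ₖ Z) - vecMulVec v (star v)).PosSemidef ↔
      ((ptraceFst (vecMulVec v (star v)))ᴴ * Z⁻¹).trace.re ≤ 1 := by
  have hA : ((1 : Matrix (Fin m) (Fin m) ℂ) ⊗ₖ Z).PosDef := PosDef.one.kronecker hZ
  have pairing_eq : ((ptraceFst (vecMulVec v (star v)))ᴴ * Z⁻¹).trace =
      star v ⬝ᵥ ((1 : Matrix (Fin m) (Fin m) ℂ) ⊗ₖ Z)⁻¹ *ᵥ v := by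
    rw [conjTranspose_ptraceFst, (posSemidef_vecMulVec_self_star v).isHermitian.eq,
      trace_ptraceFst_mul, trace_vecMulVec_mul, inv_kronecker, inv_one]
  rw [posSemidef_sub_vecMulVec_star_iff hA, pairing_eq,
    Complex.le_one_iff_re_le_one (hA.inv.posSemidef.dotProduct_mulVec_nonneg v)]

end
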